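/- For a bounded linear operator T on a complex Hilbert space, w(T) ≥ √(‖Re(T)‖² + m(Im(T))²), where m(S) = inf{|⟨Sx,x⟩| : ‖x‖ = 1} is the Crawford number, Re(T) = (T+T*)/2 and Im(T) = (T−T*)/(2i). -/

import Mathlib

open Complex

variable {H : Type*} [NormedAddCommGroup H] [InnerProductSpace ℂ H] [CompleteSpace H]

/-- The numerical radius `w(T) = sup {|⟨Tx,x⟩| : ‖x‖ = 1}`. -/
noncomputable def numRadius (T : H →L[ℂ] H) : ℝ :=
  sSup {r : ℝ | ∃ x : H, ‖x‖ = 1 ∧ r = ‖(inner ℂ (T x) x : ℂ)‖}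

/-- The Crawford number `m(T) = inf {|⟨Tx,x⟩| : ‖x‖ = 1}`. -/
noncomputable def crawford (T : H →L[ℂ] H) : ℝ :=
  sInf {r : ℝ | ∃ x : H, ‖x‖ = 1 ∧ r = ‖(inner ℂ (T x) x : ℂ)‖}

/-- The real part `Re(T) = (T + T*)/2`. -/
noncomputable def reOp (T : H →L[ℂ] H) : H →L[ℂ] H := (2 : ℂ)⁻¹ • (T + star T)

/-- The imaginary part `Im(T) = (T - T*)/(2i)`. -/
noncomputable def imOp (T : H →L[ℂ] H) : H →L[ℂ] H := (2 * Complex.I)⁻¹ • (T - star T)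

/-! Write `⟪T x, x⟫ = a + b i` for a unit vector `x`. Then `⟪Re(T) x, x⟫ = a` and
`|⟪Im(T) x, x⟫| = |b| ≥ m(Im T)`, so `a² + m(Im T)² ≤ |⟪T x, x⟫|² ≤ w(T)²`. As `Re(T)` is
self-adjoint, its norm is the supremum of `|⟪Re(T) x, x⟫|` over unit vectors, which gives
`‖Re T‖² ≤ w(T)² - m(Im T)²`. -/

open ContinuousLinearMap ComplexConjugate

lemma ContinuousLinearMap.norm_le_of_abs_re_inner_le {𝕜 E : Type*} [RCLike 𝕜]
    [NormedAddCommGroup E] [InnerProductSpace 𝕜 E] {A : E →L[𝕜] E} (hA : A.IsSymmetric)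
    {M : ℝ} (hM : 0 ≤ M) (h : ∀ x : E, ‖x‖ = 1 → |RCLike.re (inner 𝕜 (A x) x)| ≤ M) :
    ‖A‖ ≤ M := by
  rw [A.norm_eq_iSup_rayleighQuotient hA]
  refine ciSup_le fun x ↦ ?_
  rcases eq_or_ne x 0 with rfl | hx
  · simpa using hM
  obtain ⟨y, hy, hxy⟩ : A.rayleighQuotient x ∈ A.rayleighQuotient '' Metric.sphere 0 1 := by
    rw [← A.image_rayleigh_eq_image_rayleigh_sphere one_pos]
    exact ⟨x, hx, rfl⟩
  rw [mem_sphere_zero_iff_norm] at hy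
  rw [← hxy]
  simpa [rayleighQuotient, reApplyInnerSelf_apply, hy] using h y hy

section

variable {E : Type*} [NormedAddCommGroup E] [InnerProductSpace ℂ E]

lemma norm_inner_apply_self_le_numRadius (T : E →L[ℂ] E) {x : E} (hx : ‖x‖ = 1) :
    ‖inner ℂ (T x) x‖ ≤ numRadius T := by
  refine le_csSup ⟨‖T‖, ?_⟩ ⟨x, hx, rfl⟩
  rintro r ⟨y, hy, rfl⟩
  calc ‖inner ℂ (T y) y‖ ≤ ‖T y‖ * ‖y‖ := norm_inner_le_norm _ _
    _ ≤ ‖T‖ * ‖y‖ * ‖y‖ := by gcongr; exact T.le_opNorm y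
    _ = ‖T‖ := by simp [hy]

lemma crawford_le_norm_inner_apply_self (T : E →L[ℂ] E) {x : E} (hx : ‖x‖ = 1) :
    crawford T ≤ ‖inner ℂ (T x) x‖ := by
  refine csInf_le ⟨0, ?_⟩ ⟨x, hx, rfl⟩
  rintro r ⟨y, -, rfl⟩
  exact norm_nonneg _

lemma numRadius_nonneg (T : E →L[ℂ] E) : 0 ≤ numRadius T :=
  Real.sSup_nonneg fun _ ⟨_, _, hr⟩ ↦ hr ▸ norm_nonneg _

lemma crawford_nonneg (T : E →L[ℂ] E) : 0 ≤ crawford T :=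
  Real.sInf_nonneg fun _ ⟨_, _, hr⟩ ↦ hr ▸ norm_nonneg _

end

lemma inner_star_apply_self (T : H →L[ℂ] H) (x : H) :
    inner ℂ (star T x) x = conj (inner ℂ (T x) x) := by
  rw [star_eq_adjoint, adjoint_inner_left, inner_conj_symm]

lemma inner_reOp_apply_self (T : H →L[ℂ] H) (x : H) :
    inner ℂ (reOp T x) x = ((inner ℂ (T x) x).re : ℂ) := by
  simp only [reOp, smul_apply, add_apply, inner_smul_left, inner_add_left, inner_star_apply_self,
    map_inv₀, Complex.conj_ofNat]
  rw [Complex.add_conj]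
  push_cast
  ring

lemma inner_imOp_apply_self (T : H →L[ℂ] H) (x : H) :
    inner ℂ (imOp T x) x = ((-(inner ℂ (T x) x).im : ℝ) : ℂ) := by
  simp only [imOp, smul_apply, sub_apply, inner_smul_left, inner_sub_left, inner_star_apply_self,
    map_inv₀, map_mul, Complex.conj_I, Complex.conj_ofNat]
  rw [Complex.sub_conj]
  push_cast
  field_simp

lemma isSymmetric_reOp (T : H →L[ℂ] H) : (reOp T : H →ₗ[ℂ] H).IsSymmetric :=
  (LinearMap.isSymmetric_iff_inner_map_self_real _).2 fun x ↦ by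
    simp only [coe_coe, inner_reOp_apply_self, Complex.conj_ofReal]

lemma re_inner_sq_add_crawford_imOp_sq_le (T : H →L[ℂ] H) {x : H} (hx : ‖x‖ = 1) :
    (inner ℂ (T x) x).re ^ 2 + crawford (imOp T) ^ 2 ≤ numRadius T ^ 2 := by
  set z := inner ℂ (T x) x
  have hm : crawford (imOp T) ≤ |z.im| := by
    simpa [inner_imOp_apply_self] using crawford_le_norm_inner_apply_self (imOp T) hx
  have hw : ‖z‖ ≤ numRadius T := norm_inner_apply_self_le_numRadius T hx
  calc z.re ^ 2 + crawford (imOp T) ^ 2 ≤ z.re ^ 2 + |z.im| ^ 2 := by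
        gcongr
        exact crawford_nonneg _
    _ = ‖z‖ ^ 2 := by rw [sq_abs, Complex.sq_norm, Complex.normSq_apply]; ring
    _ ≤ numRadius T ^ 2 := by gcongr

lemma norm_reOp_le (T : H →L[ℂ] H) :
    ‖reOp T‖ ≤ √(numRadius T ^ 2 - crawford (imOp T) ^ 2) := by
  refine norm_le_of_abs_re_inner_le (isSymmetric_reOp T) (Real.sqrt_nonneg _) fun x hx ↦ ?_
  rw [inner_reOp_apply_self, RCLike.re_to_complex, Complex.ofReal_re]
  exact Real.abs_le_sqrt (by linarith [re_inner_sq_add_crawford_imOp_sq_le T hx])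

lemma norm_reOp_sq_add_crawford_imOp_sq_le (T : H →L[ℂ] H) :
    ‖reOp T‖ ^ 2 + crawford (imOp T) ^ 2 ≤ numRadius T ^ 2 := by
  rcases subsingleton_or_nontrivial H with _ | _
  · -- there are no unit vectors, and `sSup ∅ = sInf ∅ = 0`
    simp [numRadius, crawford, Subsingleton.eq_zero]
  obtain ⟨u, hu⟩ := exists_norm_eq H zero_le_one
  have hmw : crawford (imOp T) ^ 2 ≤ numRadius T ^ 2 :=
    le_of_add_le_of_nonneg_right (re_inner_sq_add_crawford_imOp_sq_le T hu) (sq_nonneg _)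
  have hre := pow_le_pow_left₀ (norm_nonneg _) (norm_reOp_le T) 2
  rw [Real.sq_sqrt (sub_nonneg.2 hmw)] at hre
  linarith

theorem stmt10 (T : H →L[ℂ] H) :
    numRadius T ≥ Real.sqrt (‖reOp T‖ ^ 2 + crawford (imOp T) ^ 2) :=
  Real.sqrt_le_iff.2 ⟨numRadius_nonneg T, norm_reOp_sq_add_crawford_imOp_sq_le T⟩
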